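/- Let E_1,...,E_m, M_1,...,M_m, Z_1,...,Z_m be random variables with values in finite sets on a common probability space, and let ε ≥ 0. Write M^j = (M_1,...,M_j) and Z^j = (Z_1,...,Z_j). Assume: (i) for every j in {1,...,m}, I(E_j; (M_j, Z_j)) ≤ ε; and (ii) for every j in {2,...,m}, the chaining Markov condition I((M^{j−1}, Z^{j−1}); (M_j, E_j, Z_j) | E_{j−1}) = 0 holds. Then for every j in {1,...,m}, I(E_j; (M^j, Z^j)) ≤ j·ε. -/

import Mathlib

open Finset

/-- Probability that the random variable `X` takes the value `a`, under the
probability mass function `p` on the finite sample space `Ω`. -/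
noncomputable def probOf {Ω α : Type*} [Fintype Ω] [Fintype α] [DecidableEq α]
    (p : Ω → ℝ) (X : Ω → α) (a : α) : ℝ :=
  ∑ ω, if X ω = a then p ω else 0

/-- Shannon entropy (base 2) of the random variable `X`. -/
noncomputable def entropy {Ω α : Type*} [Fintype Ω] [Fintype α] [DecidableEq α]
    (p : Ω → ℝ) (X : Ω → α) : ℝ :=
  -∑ a, probOf p X a * Real.logb 2 (probOf p X a)

/-- Conditional entropy `H(X|Y)` (base 2). -/
noncomputable def condEntropy {Ω α β : Type*} [Fintype Ω] [Fintype α] [Fintype β]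
    [DecidableEq α] [DecidableEq β] (p : Ω → ℝ) (X : Ω → α) (Y : Ω → β) : ℝ :=
  entropy p (fun ω => (X ω, Y ω)) - entropy p Y

/-- Mutual information `I(X;Y)` (base 2). -/
noncomputable def mutualInfo {Ω α β : Type*} [Fintype Ω] [Fintype α] [Fintype β]
    [DecidableEq α] [DecidableEq β] (p : Ω → ℝ) (X : Ω → α) (Y : Ω → β) : ℝ :=
  entropy p X + entropy p Y - entropy p (fun ω => (X ω, Y ω))

/-- Conditional mutual information `I(X;Y|Z)` (base 2). -/
noncomputable def condMutualInfo {Ω α β γ : Type*} [Fintype Ω] [Fintype α] [Fintype β]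
    [Fintype γ] [DecidableEq α] [DecidableEq β] [DecidableEq γ]
    (p : Ω → ℝ) (X : Ω → α) (Y : Ω → β) (Z : Ω → γ) : ℝ :=
  entropy p (fun ω => (X ω, Z ω)) + entropy p (fun ω => (Y ω, Z ω))
    - entropy p (fun ω => (X ω, Y ω, Z ω)) - entropy p Z

/-!
Write `B = (M^{j-1}, Z^{j-1})` and `C = (M_j, Z_j)`. Since `I(B; C) ≥ 0`, the chain rule gives
`I(E_j; B, C) ≤ I(E_j; C) + I((E_j, C); B)`. The pair `(E_j, C)` is a function of
`(M_j, E_j, Z_j)`, which is independent of `B` given `E_{j-1}`; by data processing along this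
Markov chain, `I((E_j, C); B) ≤ I(E_{j-1}; B)`, which is at most `(j - 1) ε` by induction.
All these inequalities rest on `I(X; Y | Z) ≥ 0`, which is `log t ≤ t - 1` applied to the density
of the conditionally independent coupling against the joint law.
-/

section Entropy

variable {Ω α β γ : Type*} [Fintype Ω] [Fintype α] [Fintype β] [Fintype γ]
  [DecidableEq α] [DecidableEq β] [DecidableEq γ]

lemma probOf_nonneg {p : Ω → ℝ} (hp : ∀ ω, 0 ≤ p ω) (X : Ω → α) (a : α) :
    0 ≤ probOf p X a :=
  sum_nonneg fun ω _ => by split_ifs <;> simp [hp ω]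

lemma le_probOf_apply {p : Ω → ℝ} (hp : ∀ ω, 0 ≤ p ω) (X : Ω → α) (ω : Ω) :
    p ω ≤ probOf p X (X ω) := by
  unfold probOf
  simpa using single_le_sum (f := fun ω' => if X ω' = X ω then p ω' else 0)
    (fun ω' _ => by split_ifs <;> simp [hp ω']) (mem_univ ω)

lemma probOf_apply_pos {p : Ω → ℝ} (hp : ∀ ω, 0 ≤ p ω) (X : Ω → α) {ω : Ω} (hω : 0 < p ω) :
    0 < probOf p X (X ω) :=
  hω.trans_le (le_probOf_apply hp X ω)

lemma sum_probOf_mul (p : Ω → ℝ) (X : Ω → α) (g : α → ℝ) :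
    ∑ a, probOf p X a * g a = ∑ ω, p ω * g (X ω) := by
  simp only [probOf, sum_mul, ite_mul, zero_mul]
  rw [sum_comm]
  simp

lemma sum_probOf (p : Ω → ℝ) (X : Ω → α) : ∑ a, probOf p X a = ∑ ω, p ω := by
  simpa using sum_probOf_mul p X 1

lemma sum_probOf_pair_left (p : Ω → ℝ) (X : Ω → α) (Y : Ω → β) (b : β) :
    ∑ a, probOf p (fun ω => (X ω, Y ω)) (a, b) = probOf p Y b := by
  simp only [probOf]
  rw [sum_comm]
  refine sum_congr rfl fun ω _ => ?_
  by_cases h : Y ω = b <;> simp [h]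

lemma entropy_eq_neg_sum (p : Ω → ℝ) (X : Ω → α) :
    entropy p X = -∑ ω, p ω * Real.logb 2 (probOf p X (X ω)) := by
  rw [entropy, sum_probOf_mul p X fun a => Real.logb 2 (probOf p X a)]

lemma probOf_comp_of_injective (p : Ω → ℝ) (X : Ω → α) {f : α → β}
    (hf : Function.Injective f) (a : α) :
    probOf p (fun ω => f (X ω)) (f a) = probOf p X a := by
  simp only [probOf, hf.eq_iff]

lemma entropy_comp_of_injective (p : Ω → ℝ) (X : Ω → α) {f : α → β}
    (hf : Function.Injective f) :
    entropy p (fun ω => f (X ω)) = entropy p X := by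
  simp only [entropy_eq_neg_sum, probOf_comp_of_injective p X hf]

end Entropy

section Nonneg

variable {Ω α β γ : Type*} [Fintype Ω] [Fintype α] [Fintype β] [Fintype γ]
  [DecidableEq α] [DecidableEq β] [DecidableEq γ]

lemma sum_mul_logb_le {p t : Ω → ℝ} (hp : ∀ ω, 0 ≤ p ω) (ht : ∀ ω, 0 < p ω → 0 < t ω) :
    ∑ ω, p ω * Real.logb 2 (t ω) ≤ (∑ ω, p ω * t ω - ∑ ω, p ω) / Real.log 2 := by
  rw [← sum_sub_distrib, sum_div]
  refine sum_le_sum fun ω _ => ?_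
  rcases (hp ω).eq_or_lt with h | h
  · simp [← h]
  · rw [Real.logb, ← mul_sub_one, mul_div_assoc]
    gcongr
    exact Real.log_le_sub_one_of_pos (ht ω h)

/-- The density `P(x,z) P(y,z) / (P(x,y,z) P(z))` of the conditionally independent coupling of
`X` and `Y` given `Z` with respect to their joint law, at the values taken at `ω`. -/
noncomputable def condIndepRatio (p : Ω → ℝ) (X : Ω → α) (Y : Ω → β) (Z : Ω → γ) (ω : Ω) : ℝ :=
  probOf p (fun ω => (X ω, Z ω)) (X ω, Z ω) * probOf p (fun ω => (Y ω, Z ω)) (Y ω, Z ω) /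
    (probOf p (fun ω => (X ω, Y ω, Z ω)) (X ω, Y ω, Z ω) * probOf p Z (Z ω))

lemma condIndepRatio_pos {p : Ω → ℝ} (hp : ∀ ω, 0 ≤ p ω) (X : Ω → α) (Y : Ω → β) (Z : Ω → γ)
    {ω : Ω} (hω : 0 < p ω) : 0 < condIndepRatio p X Y Z ω := by
  unfold condIndepRatio
  have := probOf_apply_pos hp Z hω
  have := probOf_apply_pos hp (fun ω => (X ω, Z ω)) hω
  have := probOf_apply_pos hp (fun ω => (Y ω, Z ω)) hω
  have := probOf_apply_pos hp (fun ω => (X ω, Y ω, Z ω)) hω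
  positivity

lemma condMutualInfo_eq_neg_sum_mul_logb {p : Ω → ℝ} (hp : ∀ ω, 0 ≤ p ω)
    (X : Ω → α) (Y : Ω → β) (Z : Ω → γ) :
    condMutualInfo p X Y Z = -∑ ω, p ω * Real.logb 2 (condIndepRatio p X Y Z ω) := by
  simp only [condMutualInfo, entropy_eq_neg_sum, ← sum_neg_distrib, ← sum_add_distrib,
    ← sum_sub_distrib]
  refine sum_congr rfl fun ω _ => ?_
  rcases (hp ω).eq_or_lt with h | h
  · simp [← h]
  have hZ := (probOf_apply_pos hp Z h).ne'
  have hXZ := (probOf_apply_pos hp (fun ω => (X ω, Z ω)) h).ne'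
  have hYZ := (probOf_apply_pos hp (fun ω => (Y ω, Z ω)) h).ne'
  have hXYZ := (probOf_apply_pos hp (fun ω => (X ω, Y ω, Z ω)) h).ne'
  rw [condIndepRatio, Real.logb_div (mul_ne_zero hXZ hYZ) (mul_ne_zero hXYZ hZ),
    Real.logb_mul hXZ hYZ, Real.logb_mul hXYZ hZ]
  ring

lemma sum_mul_condIndepRatio_le {p : Ω → ℝ} (hp : ∀ ω, 0 ≤ p ω)
    (X : Ω → α) (Y : Ω → β) (Z : Ω → γ) :
    ∑ ω, p ω * condIndepRatio p X Y Z ω ≤ ∑ ω, p ω := by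
  set pXZ := probOf p (fun ω => (X ω, Z ω))
  set pYZ := probOf p (fun ω => (Y ω, Z ω))
  set pXYZ := probOf p (fun ω => (X ω, Y ω, Z ω))
  set pZ := probOf p Z
  calc ∑ ω, p ω * condIndepRatio p X Y Z ω
      = ∑ w, pXYZ w * (pXZ (w.1, w.2.2) * pYZ (w.2.1, w.2.2) / (pXYZ w * pZ w.2.2)) :=
        (sum_probOf_mul p (fun ω => (X ω, Y ω, Z ω))
          fun w => pXZ (w.1, w.2.2) * pYZ (w.2.1, w.2.2) / (pXYZ w * pZ w.2.2)).symm
    _ ≤ ∑ w : α × β × γ, pXZ (w.1, w.2.2) * pYZ (w.2.1, w.2.2) / pZ w.2.2 := by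
        refine sum_le_sum fun w _ => ?_
        have hw : 0 ≤ pXYZ w := probOf_nonneg hp _ w
        rcases hw.eq_or_lt with h | h
        · rw [← h, zero_mul]
          exact div_nonneg (mul_nonneg (probOf_nonneg hp _ _) (probOf_nonneg hp _ _))
            (probOf_nonneg hp _ _)
        · rw [← mul_div_assoc, mul_div_mul_left _ _ h.ne']
    _ = ∑ z, (∑ x, pXZ (x, z)) * (∑ y, pYZ (y, z)) / pZ z := by
        simp only [Fintype.sum_prod_type, sum_mul_sum, sum_div]
        exact (sum_congr rfl fun x _ => sum_comm).trans sum_comm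
    _ = ∑ z, pZ z := by simp only [pXZ, pYZ, pZ, sum_probOf_pair_left, mul_self_div_self]
    _ = ∑ ω, p ω := sum_probOf p Z

end Nonneg

section MutualInfo

variable {Ω α β γ δ κ : Type*} [Fintype Ω] [Fintype α] [Fintype β] [Fintype γ] [Fintype δ]
  [Fintype κ] [DecidableEq α] [DecidableEq β] [DecidableEq γ] [DecidableEq δ] [DecidableEq κ]

lemma condMutualInfo_nonneg {p : Ω → ℝ} (hp : ∀ ω, 0 ≤ p ω)
    (X : Ω → α) (Y : Ω → β) (Z : Ω → γ) : 0 ≤ condMutualInfo p X Y Z := by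
  have hlog := sum_mul_logb_le hp fun ω => condIndepRatio_pos hp X Y Z
  have hsum := sum_mul_condIndepRatio_le hp X Y Z
  rw [condMutualInfo_eq_neg_sum_mul_logb hp, neg_nonneg]
  exact hlog.trans (div_nonpos_of_nonpos_of_nonneg (by linarith) (Real.log_nonneg one_le_two))

lemma mutualInfo_eq_condMutualInfo_const {p : Ω → ℝ} (hp1 : ∑ ω, p ω = 1)
    (X : Ω → α) (Y : Ω → β) : mutualInfo p X Y = condMutualInfo p X Y fun _ => () := by
  have hunit : entropy p (fun _ => ()) = 0 := by simp [entropy, probOf, hp1]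
  have hX : entropy p (fun ω => (X ω, ())) = entropy p X :=
    entropy_comp_of_injective p X (f := fun a => (a, ())) (Prod.mk_left_injective ())
  have hY : entropy p (fun ω => (Y ω, ())) = entropy p Y :=
    entropy_comp_of_injective p Y (f := fun b => (b, ())) (Prod.mk_left_injective ())
  have hXY : entropy p (fun ω => (X ω, Y ω, ())) = entropy p (fun ω => (X ω, Y ω)) :=
    entropy_comp_of_injective p (fun ω => (X ω, Y ω)) (f := fun ab => (ab.1, ab.2, ()))
      fun _ _ h => by simpa [Prod.ext_iff] using h
  rw [mutualInfo, condMutualInfo, hX, hY, hXY, hunit]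
  ring

lemma mutualInfo_nonneg {p : Ω → ℝ} (hp : ∀ ω, 0 ≤ p ω) (hp1 : ∑ ω, p ω = 1)
    (X : Ω → α) (Y : Ω → β) : 0 ≤ mutualInfo p X Y := by
  rw [mutualInfo_eq_condMutualInfo_const hp1]
  exact condMutualInfo_nonneg hp _ _ _

lemma mutualInfo_comm (p : Ω → ℝ) (X : Ω → α) (Y : Ω → β) :
    mutualInfo p X Y = mutualInfo p Y X := by
  have hswap : entropy p (fun ω => (Y ω, X ω)) = entropy p (fun ω => (X ω, Y ω)) :=
    entropy_comp_of_injective p (fun ω => (X ω, Y ω)) (f := Prod.swap) Prod.swap_injective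
  rw [mutualInfo, mutualInfo, hswap]
  ring

lemma mutualInfo_comp_right_of_injective (p : Ω → ℝ) (X : Ω → α) (Y : Ω → β) {f : β → γ}
    (hf : Function.Injective f) : mutualInfo p X (fun ω => f (Y ω)) = mutualInfo p X Y := by
  have hXY : entropy p (fun ω => (X ω, f (Y ω))) = entropy p (fun ω => (X ω, Y ω)) :=
    entropy_comp_of_injective p (fun ω => (X ω, Y ω)) (f := Prod.map id f)
      (Function.injective_id.prodMap hf)
  rw [mutualInfo, mutualInfo, entropy_comp_of_injective p Y hf, hXY]

lemma mutualInfo_pair_eq_add_condMutualInfo (p : Ω → ℝ) (X : Ω → α) (Y : Ω → β) (Z : Ω → γ) :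
    mutualInfo p X (fun ω => (Y ω, Z ω)) = mutualInfo p X Z + condMutualInfo p X Y Z := by
  rw [mutualInfo, mutualInfo, condMutualInfo]
  ring

lemma mutualInfo_comp_right_le {p : Ω → ℝ} (hp : ∀ ω, 0 ≤ p ω)
    (X : Ω → α) (Y : Ω → β) (f : β → γ) :
    mutualInfo p X (fun ω => f (Y ω)) ≤ mutualInfo p X Y := by
  have hgraph : mutualInfo p X (fun ω => (Y ω, f (Y ω))) = mutualInfo p X Y :=
    mutualInfo_comp_right_of_injective p X Y (f := fun b => (b, f b))
      fun _ _ h => congrArg Prod.fst h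
  rw [mutualInfo_pair_eq_add_condMutualInfo] at hgraph
  linarith [condMutualInfo_nonneg hp X Y fun ω => f (Y ω)]

lemma mutualInfo_le_of_condMutualInfo_eq_zero {p : Ω → ℝ} (hp : ∀ ω, 0 ≤ p ω)
    {X : Ω → α} {Y : Ω → β} {Z : Ω → γ} (hXYZ : condMutualInfo p X Y Z = 0) :
    mutualInfo p X Y ≤ mutualInfo p X Z := by
  have h := mutualInfo_comp_right_le hp X (fun ω => (Y ω, Z ω)) Prod.fst
  rwa [mutualInfo_pair_eq_add_condMutualInfo, hXYZ, add_zero] at h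

lemma mutualInfo_pair_le {p : Ω → ℝ} (hp : ∀ ω, 0 ≤ p ω) (hp1 : ∑ ω, p ω = 1)
    (X : Ω → α) (Y : Ω → β) (Z : Ω → γ) :
    mutualInfo p X (fun ω => (Y ω, Z ω)) ≤
      mutualInfo p X Z + mutualInfo p (fun ω => (X ω, Z ω)) Y := by
  have hassoc : entropy p (fun ω => ((X ω, Z ω), Y ω)) = entropy p (fun ω => (X ω, Y ω, Z ω)) :=
    entropy_comp_of_injective p (fun ω => (X ω, Y ω, Z ω)) (f := fun t => ((t.1, t.2.2), t.2.1))
      fun _ _ h => by simp only [Prod.ext_iff] at h ⊢; tauto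
  have hYZ := mutualInfo_nonneg hp hp1 Y Z
  unfold mutualInfo at hYZ ⊢
  rw [hassoc]
  linarith

lemma mutualInfo_pair_le_of_markov {p : Ω → ℝ} (hp : ∀ ω, 0 ≤ p ω) (hp1 : ∑ ω, p ω = 1)
    (A : Ω → α) (B : Ω → β) (C : Ω → γ) {D : Ω → δ} {X : Ω → κ} (f : κ → α × γ)
    (hX : ∀ ω, (A ω, C ω) = f (X ω)) (hmarkov : condMutualInfo p B X D = 0) :
    mutualInfo p A (fun ω => (B ω, C ω)) ≤ mutualInfo p A C + mutualInfo p D B := by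
  have hBX : mutualInfo p (fun ω => (A ω, C ω)) B ≤ mutualInfo p B X := by
    rw [mutualInfo_comm, funext hX]
    exact mutualInfo_comp_right_le hp B X f
  have hBD := mutualInfo_le_of_condMutualInfo_eq_zero hp hmarkov
  linarith [mutualInfo_pair_le hp hp1 A B C, mutualInfo_comm p B D]

end MutualInfo

section BlockHistory

variable {ι : Type*}

abbrev BlockHistory (β γ : ι → Type*) (P : ι → Prop) : Type _ :=
  ((i : {i // P i}) → β i.1) × ((i : {i // P i}) → γ i.1)

variable {Ω : Type*} {β γ : ι → Type*} (M : (i : ι) → Ω → β i) (Z : (i : ι) → Ω → γ i)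

def blockHistory (P : ι → Prop) (ω : Ω) : BlockHistory β γ P :=
  (fun i => M i.1 ω, fun i => Z i.1 ω)

lemma exists_blockHistory_eq_comp_restrict {P Q : ι → Prop} (hQP : ∀ i, Q i → P i) :
    ∃ f : BlockHistory β γ P → BlockHistory β γ Q,
      blockHistory M Z Q = fun ω => f (blockHistory M Z P ω) :=
  ⟨fun H => (fun i => H.1 ⟨i.1, hQP _ i.2⟩, fun i => H.2 ⟨i.1, hQP _ i.2⟩), rfl⟩

lemma exists_blockHistory_eq_comp_extend {P Q : ι → Prop} (n : ι)
    (hPQ : ∀ i, P i → Q i ∨ i = n) :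
    ∃ f : BlockHistory β γ Q × (β n × γ n) → BlockHistory β γ P,
      blockHistory M Z P = fun ω => f (blockHistory M Z Q ω, (M n ω, Z n ω)) := by
  classical
  refine ⟨fun H => (fun i => if h : Q i.1 then H.1.1 ⟨i.1, h⟩
      else ((hPQ _ i.2).resolve_left h).symm ▸ H.2.1,
    fun i => if h : Q i.1 then H.1.2 ⟨i.1, h⟩
      else ((hPQ _ i.2).resolve_left h).symm ▸ H.2.2), ?_⟩
  funext ω
  refine Prod.ext (funext fun ⟨i, hi⟩ => ?_) (funext fun ⟨i, hi⟩ => ?_) <;>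
  · dsimp only [blockHistory]
    split_ifs with h
    · rfl
    · obtain rfl := (hPQ i hi).resolve_left h
      rfl

lemma exists_blockHistory_eq_comp_of_forall_eq {P : ι → Prop} (n : ι)
    (hP : ∀ i, P i → i = n) :
    ∃ f : β n × γ n → BlockHistory β γ P, blockHistory M Z P = fun ω => f (M n ω, Z n ω) := by
  obtain ⟨f, hf⟩ := exists_blockHistory_eq_comp_extend M Z (Q := fun _ => False) n
    fun i hi => Or.inr (hP i hi)
  exact ⟨fun c => f ((fun i => i.2.elim, fun i => i.2.elim), c),
    hf.trans (funext fun ω => congrArg (fun H => f (H, _)) (Subsingleton.elim _ _))⟩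

end BlockHistory

/-- Blocks are indexed from `0`: `j : Fin m` is the paper's block `j.val + 1`. -/
theorem chaining_leakage_le_general {Ω : Type*} [Fintype Ω]
    (p : Ω → ℝ) (hp : ∀ ω, 0 ≤ p ω) (hp1 : ∑ ω, p ω = 1)
    (m : ℕ) (α β γ : Fin m → Type*)
    [∀ j, Fintype (α j)] [∀ j, DecidableEq (α j)]
    [∀ j, Fintype (β j)] [∀ j, DecidableEq (β j)]
    [∀ j, Fintype (γ j)] [∀ j, DecidableEq (γ j)]
    (E : (j : Fin m) → Ω → α j) (M : (j : Fin m) → Ω → β j) (Z : (j : Fin m) → Ω → γ j)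
    (ε : ℝ)
    (h1 : ∀ j : Fin m, mutualInfo p (E j) (fun ω => (M j ω, Z j ω)) ≤ ε)
    (h2 : ∀ j : Fin m, 0 < j.val →
      condMutualInfo p
        (fun ω => ((fun i : {i : Fin m // i.val < j.val} => M i.1 ω),
                   (fun i : {i : Fin m // i.val < j.val} => Z i.1 ω)))
        (fun ω => (M j ω, E j ω, Z j ω))
        (E ⟨j.val - 1, Nat.lt_of_le_of_lt (Nat.sub_le _ _) j.isLt⟩) = 0)
    (j : Fin m) :
    mutualInfo p (E j)
      (fun ω => ((fun i : {i : Fin m // i.val ≤ j.val} => M i.1 ω),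
                 (fun i : {i : Fin m // i.val ≤ j.val} => Z i.1 ω)))
      ≤ (j.val + 1) * ε := by
  suffices key : ∀ n (hn : n < m),
      mutualInfo p (E ⟨n, hn⟩) (blockHistory M Z (·.val ≤ n)) ≤ (n + 1) * ε from key j j.isLt
  intro n
  induction n with
  | zero =>
    intro hn
    obtain ⟨f, hf⟩ := exists_blockHistory_eq_comp_of_forall_eq M Z (P := (·.val ≤ 0)) ⟨0, hn⟩
      fun i hi => Fin.ext (Nat.le_zero.mp hi)
    rw [hf, Nat.cast_zero, zero_add, one_mul]
    exact (mutualInfo_comp_right_le hp _ _ f).trans (h1 _)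
  | succ k ih =>
    intro hn
    obtain ⟨f, hf⟩ := exists_blockHistory_eq_comp_extend M Z (P := (·.val ≤ k + 1))
      (Q := (·.val < k + 1)) ⟨k + 1, hn⟩ fun i hi => (Nat.lt_or_eq_of_le hi).imp_right Fin.ext
    obtain ⟨g, hg⟩ := exists_blockHistory_eq_comp_restrict M Z (P := (·.val ≤ k))
      (Q := (·.val < k + 1)) fun i => Nat.lt_succ_iff.mp
    have hprev : mutualInfo p (E ⟨k, k.lt_succ_self.trans hn⟩)
        (blockHistory M Z (·.val < k + 1)) ≤ (k + 1) * ε := by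
      rw [hg]
      exact (mutualInfo_comp_right_le hp _ _ g).trans (ih _)
    have hstep := mutualInfo_pair_le_of_markov hp hp1 (E ⟨k + 1, hn⟩)
      (blockHistory M Z (·.val < k + 1)) (fun ω => (M ⟨k + 1, hn⟩ ω, Z ⟨k + 1, hn⟩ ω))
      (fun x => (x.2.1, x.1, x.2.2)) (fun ω => rfl) (h2 ⟨k + 1, hn⟩ k.succ_pos)
    rw [hf]
    calc _ ≤ _ := mutualInfo_comp_right_le hp _ _ f
      _ ≤ ε + (k + 1) * ε := hstep.trans (add_le_add (h1 _) hprev)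
      _ = _ := by push_cast; ring

/-- under per-block leakage bounds and the chaining Markov condition,
`I(E_j; (M^j, Z^j)) ≤ j·ε` for every `j` (here `j`-th block is index `j : Fin m`,
i.e. the `(j.val+1)`-st block). -/
theorem chaining_leakage_le {Ω : Type*} [Fintype Ω]
    (p : Ω → ℝ) (hp : ∀ ω, 0 ≤ p ω) (hp1 : ∑ ω, p ω = 1)
    (m : ℕ) (α β γ : Fin m → Type*)
    [∀ j, Fintype (α j)] [∀ j, DecidableEq (α j)]
    [∀ j, Fintype (β j)] [∀ j, DecidableEq (β j)]
    [∀ j, Fintype (γ j)] [∀ j, DecidableEq (γ j)]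
    (E : (j : Fin m) → Ω → α j) (M : (j : Fin m) → Ω → β j) (Z : (j : Fin m) → Ω → γ j)
    (ε : ℝ) (hε : 0 ≤ ε)
    (h1 : ∀ j : Fin m, mutualInfo p (E j) (fun ω => (M j ω, Z j ω)) ≤ ε)
    (h2 : ∀ j : Fin m, 0 < j.val →
      condMutualInfo p
        (fun ω => ((fun i : {i : Fin m // i.val < j.val} => M i.1 ω),
                   (fun i : {i : Fin m // i.val < j.val} => Z i.1 ω)))
        (fun ω => (M j ω, E j ω, Z j ω))
        (E ⟨j.val - 1, Nat.lt_of_le_of_lt (Nat.sub_le _ _) j.isLt⟩) = 0)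
    (j : Fin m) :
    mutualInfo p (E j)
      (fun ω => ((fun i : {i : Fin m // i.val ≤ j.val} => M i.1 ω),
                 (fun i : {i : Fin m // i.val ≤ j.val} => Z i.1 ω)))
      ≤ (j.val + 1) * ε :=
  chaining_leakage_le_general p hp hp1 m α β γ E M Z ε h1 h2 j
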